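/- For n ≥ 3, the assignments σ_0^B ↦ ρ̃σ_{n-1}^{-1}σ_{n-2}^{-1}⋯σ_1^{-1} and σ_i^B ↦ σ_i for 1 ≤ i ≤ n-1 define a group isomorphism from the type B_n braid group B_n^B onto the extended affine braid group B_n. -/

import Mathlib

noncomputable section

namespace SkeinTL

/-- Generators of the extended affine braid group: `s i` (`i : ZMod n`, the σᵢ with
indices mod `n`) and `p` (= ρ̃). -/
inductive BGen (n : ℕ) : Type
  | s : ZMod n → BGen n
  | p : BGen n

def fσ (n : ℕ) (i : ZMod n) : FreeGroup (BGen n) := FreeGroup.of (BGen.s i)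
def fρ (n : ℕ) : FreeGroup (BGen n) := FreeGroup.of (BGen.p : BGen n)

/-- The relator set of the extended affine braid group `B_n` (indices mod `n`):
`σᵢσⱼ = σⱼσᵢ` if `i - j ≠ ±1`; `σᵢσ_{i+1}σᵢ = σ_{i+1}σᵢσ_{i+1}`; `ρ̃σᵢ = σ_{i+1}ρ̃`. -/
def Brels (n : ℕ) : Set (FreeGroup (BGen n)) :=
  {w | (∃ i j : ZMod n, i - j ≠ 1 ∧ i - j ≠ -1 ∧
          w = fσ n i * fσ n j * (fσ n i)⁻¹ * (fσ n j)⁻¹) ∨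
       (∃ i : ZMod n,
          w = fσ n i * fσ n (i + 1) * fσ n i *
            (fσ n (i + 1))⁻¹ * (fσ n i)⁻¹ * (fσ n (i + 1))⁻¹) ∨
       (∃ i : ZMod n, w = fρ n * fσ n i * (fρ n)⁻¹ * (fσ n (i + 1))⁻¹)}

/-- The extended affine braid group `B_n`. -/
abbrev B (n : ℕ) : Type := PresentedGroup (Brels n)

/-- The generator `σ_i` of the extended affine braid group (index mod `n`). -/
def σB (n : ℕ) (i : ZMod n) : B n := PresentedGroup.of (BGen.s i)

/-- The generator `ρ̃` of the extended affine braid group. -/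
def ρB (n : ℕ) : B n := PresentedGroup.of (BGen.p : BGen n)

/-- The defining conditions of the insertion map `I_n^{br} : B_n → B_{n+1}`:
`σ_i ↦ σ_i` (`1 ≤ i ≤ n-1`), `σ_n ↦ σ_nσ_{n+1}σ_n⁻¹`, `ρ̃ ↦ ρ̃σ_n⁻¹`. -/
def InsBrCond (n : ℕ) (φ : B n →* B (n + 1)) : Prop :=
  (∀ i : ℕ, 1 ≤ i → i ≤ n - 1 →
      φ (σB n (i : ZMod n)) = σB (n + 1) (i : ZMod (n + 1))) ∧
  φ (σB n (n : ZMod n)) =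
    σB (n + 1) (n : ZMod (n + 1)) * σB (n + 1) ((n + 1 : ℕ) : ZMod (n + 1)) *
      (σB (n + 1) (n : ZMod (n + 1)))⁻¹ ∧
  φ (ρB n) = ρB (n + 1) * (σB (n + 1) (n : ZMod (n + 1)))⁻¹

/-- The relator set of the braid group of type `B_n`, on generators
`σ_0^B, …, σ_{n-1}^B` (indexed by `Fin n`):
`σ₀σ₁σ₀σ₁ = σ₁σ₀σ₁σ₀`; `σᵢσ_{i+1}σᵢ = σ_{i+1}σᵢσ_{i+1}` (`1 ≤ i ≤ n-2`);
`σᵢσⱼ = σⱼσᵢ` (`|i-j| ≥ 2`). -/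
def BBrels (n : ℕ) : Set (FreeGroup (Fin n)) :=
  {w | (∃ i j : Fin n, (i : ℕ) = 0 ∧ (j : ℕ) = 1 ∧
          w = FreeGroup.of i * FreeGroup.of j * FreeGroup.of i * FreeGroup.of j *
            (FreeGroup.of i)⁻¹ * (FreeGroup.of j)⁻¹ *
            (FreeGroup.of i)⁻¹ * (FreeGroup.of j)⁻¹) ∨
       (∃ i j : Fin n, 1 ≤ (i : ℕ) ∧ (j : ℕ) = (i : ℕ) + 1 ∧
          w = FreeGroup.of i * FreeGroup.of j * FreeGroup.of i *
            (FreeGroup.of j)⁻¹ * (FreeGroup.of i)⁻¹ * (FreeGroup.of j)⁻¹) ∨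
       (∃ i j : Fin n, ((i : ℕ) + 2 ≤ (j : ℕ) ∨ (j : ℕ) + 2 ≤ (i : ℕ)) ∧
          w = FreeGroup.of i * FreeGroup.of j *
            (FreeGroup.of i)⁻¹ * (FreeGroup.of j)⁻¹)}

/-- The braid group of type `B_n`. -/
abbrev BB (n : ℕ) : Type := PresentedGroup (BBrels n)

/-- The generator `σ_i^B` (`0 ≤ i ≤ n-1`) of the type `B_n` braid group. -/
def σBB (n : ℕ) (i : Fin n) : BB n := PresentedGroup.of i

/-! ### auxiliary -/

lemma mk_rel_one {α : Type*} {rels : Set (FreeGroup α)} {r : FreeGroup α} (h : r ∈ rels) :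
    PresentedGroup.mk rels r = 1 :=
  (QuotientGroup.eq_one_iff r).2 (Subgroup.subset_normalClosure h)

section Bside

variable {n : ℕ}

lemma Bcomm (i j : ZMod n) (h1 : i - j ≠ 1) (h2 : i - j ≠ -1) :
    σB n i * σB n j = σB n j * σB n i := by
  have := mk_rel_one (rels := Brels n)
    (r := fσ n i * fσ n j * (fσ n i)⁻¹ * (fσ n j)⁻¹)
    (Or.inl ⟨i, j, h1, h2, rfl⟩)
  simp only [map_mul, map_inv] at this
  exact commutatorElement_eq_one_iff_mul_comm.mp
    (by simpa [commutatorElement_def, σB, fσ, PresentedGroup.of] using this)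

lemma Bbraid (i : ZMod n) :
    σB n i * σB n (i + 1) * σB n i = σB n (i + 1) * σB n i * σB n (i + 1) := by
  have := mk_rel_one (rels := Brels n)
    (r := fσ n i * fσ n (i + 1) * fσ n i *
      (fσ n (i + 1))⁻¹ * (fσ n i)⁻¹ * (fσ n (i + 1))⁻¹)
    (Or.inr (Or.inl ⟨i, rfl⟩))
  simp only [map_mul, map_inv] at this
  have h : σB n i * σB n (i+1) * σB n i *
      (σB n (i+1))⁻¹ * (σB n i)⁻¹ * (σB n (i+1))⁻¹ = 1 := by
    simpa [σB, fσ, PresentedGroup.of] using this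
  have h2 : (σB n i * σB n (i+1) * σB n i) *
      (σB n (i+1) * σB n i * σB n (i+1))⁻¹ = 1 := by
    rw [← h]; group
  exact mul_inv_eq_one.mp h2

lemma Brho (i : ZMod n) : ρB n * σB n i = σB n (i + 1) * ρB n := by
  have := mk_rel_one (rels := Brels n)
    (r := fρ n * fσ n i * (fρ n)⁻¹ * (fσ n (i + 1))⁻¹)
    (Or.inr (Or.inr ⟨i, rfl⟩))
  simp only [map_mul, map_inv] at this
  have h : ρB n * σB n i * (ρB n)⁻¹ * (σB n (i+1))⁻¹ = 1 := by
    simpa [σB, ρB, fρ, fσ, PresentedGroup.of] using this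
  have h2 : (ρB n * σB n i) * (σB n (i+1) * ρB n)⁻¹ = 1 := by
    rw [← h]; group
  exact mul_inv_eq_one.mp h2

/-! ### natural indices -/

def σN (n : ℕ) (k : ℕ) : B n := σB n (k : ZMod n)

lemma castNe {a b : ℕ} (ha : a < n) (hb : b < n) (h : a ≠ b) : (a : ZMod n) ≠ (b : ZMod n) := by
  intro e
  exact h (by rw [← ZMod.val_cast_of_lt ha, ← ZMod.val_cast_of_lt hb, e])

lemma neg_one_eq (hn : 3 ≤ n) : (-1 : ZMod n) = ((n - 1 : ℕ) : ZMod n) := by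
  have h1 : (1:ℕ) ≤ n := by omega
  push_cast [Nat.cast_sub h1]
  simp [ZMod.natCast_self]

lemma sub_cast_ne_one (hn : 3 ≤ n) {i j : ℕ} (hj : j < n) (hij : i < j)
    (hd : i + 2 ≤ j) (hd2 : j + 2 ≤ i + n) :
    (i : ZMod n) - (j : ZMod n) ≠ 1 ∧ (i : ZMod n) - (j : ZMod n) ≠ -1 := by
  have hle : i ≤ j := by omega
  have e : (i : ZMod n) - (j : ZMod n) = -(((j - i : ℕ)) : ZMod n) := by
    rw [Nat.cast_sub hle]; ring
  constructor
  · intro h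
    rw [e, neg_eq_iff_eq_neg, neg_one_eq hn] at h
    exact castNe (by omega) (by omega) (by omega) h
  · intro h
    rw [e, neg_inj] at h
    have : ((j - i : ℕ) : ZMod n) = ((1 : ℕ) : ZMod n) := by simpa using h
    exact castNe (by omega) (by omega) (by omega) this

lemma commN (hn : 3 ≤ n) {i j : ℕ} (hj : j < n) (hd : i + 2 ≤ j) (hd2 : j + 2 ≤ i + n) :
    σN n i * σN n j = σN n j * σN n i := by
  obtain ⟨h1, h2⟩ := sub_cast_ne_one hn hj (by omega) hd hd2
  exact Bcomm _ _ h1 h2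

lemma braidN (j : ℕ) (hj : 1 ≤ j) :
    σN n (j-1) * σN n j * σN n (j-1) = σN n j * σN n (j-1) * σN n j := by
  have e : ((j-1 : ℕ) : ZMod n) + 1 = (j : ZMod n) := by
    rw [Nat.cast_sub hj]; push_cast; ring
  have := Bbraid (n := n) ((j-1 : ℕ) : ZMod n)
  rw [e] at this
  exact this

lemma rhoN (k : ℕ) : ρB n * σN n k = σN n (k+1) * ρB n := by
  have := Brho (n := n) (k : ZMod n)
  simpa [σN, Nat.cast_add] using this

/-! ### products -/

def sp (n : ℕ) (a b : ℕ) : B n := ((List.range' a (b + 1 - a)).map fun k => σN n k).prod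

lemma sp_nil {a b : ℕ} (h : b + 1 ≤ a) : sp n a b = 1 := by
  simp [sp, Nat.sub_eq_zero_of_le h]

lemma sp_cons {a b : ℕ} (h : a ≤ b) : sp n a b = σN n a * sp n (a+1) b := by
  have e : b + 1 - a = (b + 1 - (a+1)) + 1 := by omega
  rw [sp, e, List.range'_succ]
  simp [sp]

lemma sp_snoc {a b : ℕ} (h : a ≤ b) (hb : 1 ≤ b) : sp n a b = sp n a (b-1) * σN n b := by
  have e : b + 1 - a = (b - a) + 1 := by omega
  have e2 : (b - 1) + 1 - a = b - a := by omega
  rw [sp, e, List.range'_concat, sp, e2]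
  have : a + 1 * (b - a) = b := by omega
  rw [this]
  simp

lemma sp_append {a b c : ℕ} (h1 : a ≤ c + 1) (h2 : c ≤ b) :
    sp n a b = sp n a c * sp n (c+1) b := by
  have e : List.range' a (c + 1 - a) ++ List.range' (c+1) (b + 1 - (c+1)) =
      List.range' a (b + 1 - a) := by
    have := List.range'_append (s := a) (m := c + 1 - a) (n := b + 1 - (c+1)) (step := 1)
    rw [show a + 1 * (c + 1 - a) = c + 1 by omega] at this
    rw [show c + 1 - a + (b + 1 - (c+1)) = b + 1 - a by omega] at this
    exact this
  rw [sp, ← e]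
  simp [sp]

lemma sp_commute {a b j : ℕ}
    (h : ∀ k, a ≤ k → k ≤ b → σN n j * σN n k = σN n k * σN n j) :
    Commute (σN n j) (sp n a b) := by
  apply Commute.list_prod_right
  intro x hx
  rw [List.mem_map] at hx
  obtain ⟨k, hk, rfl⟩ := hx
  rw [List.mem_range'_1] at hk
  exact h k hk.1 (by omega)

lemma sp_shift (hn : 3 ≤ n) {a b j : ℕ} (ha : 1 ≤ a) (hb : b ≤ n-1)
    (hj1 : a < j) (hj2 : j ≤ b) :
    σN n j * sp n a b = sp n a b * σN n (j-1) := by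
  have e1 : sp n a b = sp n a (j-2) * sp n (j-1) b := by
    have := sp_append (n := n) (a := a) (b := b) (c := j - 2) (by omega) (by omega)
    rw [show j - 2 + 1 = j - 1 by omega] at this
    exact this
  have e2 : sp n (j-1) b = σN n (j-1) * (σN n j * sp n (j+1) b) := by
    rw [sp_cons (show j - 1 ≤ b by omega), show j - 1 + 1 = j by omega,
      sp_cons (show j ≤ b by omega)]
  have c1 : Commute (σN n j) (sp n a (j-2)) := by
    apply sp_commute
    intro k hk1 hk2
    exact (commN hn (by omega) (show k + 2 ≤ j by omega) (by omega)).symm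
  have c2 : Commute (σN n (j-1)) (sp n (j+1) b) := by
    apply sp_commute
    intro k hk1 hk2
    exact commN hn (by omega) (show (j-1) + 2 ≤ k by omega) (by omega)
  have br := braidN (n := n) j (by omega)
  calc σN n j * sp n a b
      = σN n j * (sp n a (j-2) * (σN n (j-1) * (σN n j * sp n (j+1) b))) := by
        rw [← e2, ← e1]
    _ = sp n a (j-2) * (σN n j * σN n (j-1) * σN n j) * sp n (j+1) b := by
        rw [← mul_assoc, c1.eq]; group
    _ = sp n a (j-2) * (σN n (j-1) * σN n j * σN n (j-1)) * sp n (j+1) b := by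
        rw [← br]
    _ = sp n a (j-2) * (σN n (j-1) * σN n j) * (σN n (j-1) * sp n (j+1) b) := by
        group
    _ = sp n a (j-2) * (σN n (j-1) * (σN n j * sp n (j+1) b)) * σN n (j-1) := by
        rw [c2.eq]; group
    _ = sp n a b * σN n (j-1) := by rw [← e2, ← e1]

lemma spW_aux (hn : 3 ≤ n) : ∀ d a, a + d = n → 2 ≤ a →
    sp n a (n-1) * sp n 1 (n-1) = sp n 1 (n-1) * sp n (a-1) (n-2) := by
  intro d
  induction d with
  | zero =>
    intro a ha h2
    rw [sp_nil (show (n-1) + 1 ≤ a by omega), sp_nil (show (n-2) + 1 ≤ a - 1 by omega),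
      one_mul, mul_one]
  | succ d ih =>
    intro a ha h2
    have h1 : sp n a (n-1) = σN n a * sp n (a+1) (n-1) := sp_cons (by omega)
    have h3 : sp n (a-1) (n-2) = σN n (a-1) * sp n a (n-2) := by
      rw [sp_cons (by omega), show a - 1 + 1 = a by omega]
    rw [h1, h3, mul_assoc]
    rcases Nat.lt_or_ge (a + 1) n with hlt | hge
    · rw [ih (a+1) (by omega) (by omega)]
      rw [← mul_assoc, sp_shift hn (by omega) (by omega) (by omega) (by omega)]
      rw [show a + 1 - 1 = a by omega]
      group
    · have haa : a = n - 1 := by omega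
      rw [sp_nil (show (n-1) + 1 ≤ a + 1 by omega), one_mul,
        sp_nil (show (n-2) + 1 ≤ a by omega), mul_one]
      have := sp_shift (n := n) hn (a := 1) (b := n-1) (j := n-1)
        (by omega) (by omega) (by omega) (by omega)
      rw [haa, this, show n - 1 - 1 = n - 2 by omega]

lemma spW (hn : 3 ≤ n) : sp n 2 (n-1) * sp n 1 (n-1) = sp n 1 (n-1) * sp n 1 (n-2) := by
  have := spW_aux hn (n-2) 2 (by omega) (le_refl 2)
  simpa using this

lemma rho_list (L : List ℕ) :
    ρB n * (L.map (σN n)).prod = ((L.map (·+1)).map (σN n)).prod * ρB n := by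
  induction L with
  | nil => simp
  | cons hd tl ih =>
    simp only [List.map_cons, List.prod_cons]
    rw [← mul_assoc, rhoN, mul_assoc, ih]
    group

lemma rho_sp (a b : ℕ) : ρB n * sp n a b = sp n (a+1) (b+1) * ρB n := by
  rw [sp, sp, rho_list]
  congr 2
  rw [show (fun x => x + 1) = (fun x => 1 + x) by funext x; omega, List.map_add_range']
  rw [show 1 + a = a + 1 by omega, show b + 1 + 1 - (a + 1) = b + 1 - a by omega]

/-! ### key identities in `B n` -/

lemma inv_shift {G : Type*} [Group G] {a b c : G} (h : a * b = b * c) :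
    b⁻¹ * a = c * b⁻¹ := by
  rw [inv_mul_eq_iff_eq_mul, ← mul_assoc, ← h]
  group

lemma commA (hn : 3 ≤ n) {j : ℕ} (h2 : 2 ≤ j) (hj : j ≤ n - 1) :
    (ρB n * (sp n 1 (n-1))⁻¹) * σN n j = σN n j * (ρB n * (sp n 1 (n-1))⁻¹) := by
  have h1 : σN n j * sp n 1 (n-1) = sp n 1 (n-1) * σN n (j-1) :=
    sp_shift hn (by omega) (by omega) (by omega) (by omega)
  have h2' : (sp n 1 (n-1))⁻¹ * σN n j = σN n (j-1) * (sp n 1 (n-1))⁻¹ := inv_shift h1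
  have h3 : ρB n * σN n (j-1) = σN n j * ρB n := by
    have := rhoN (n := n) (j-1)
    rwa [show j - 1 + 1 = j by omega] at this
  calc ρB n * (sp n 1 (n-1))⁻¹ * σN n j
      = ρB n * ((sp n 1 (n-1))⁻¹ * σN n j) := by group
    _ = ρB n * σN n (j-1) * (sp n 1 (n-1))⁻¹ := by rw [h2']; group
    _ = σN n j * (ρB n * (sp n 1 (n-1))⁻¹) := by rw [h3]; group

lemma keyI (hn : 3 ≤ n) :
    (ρB n * (sp n 1 (n-1))⁻¹) * σN n 1 * (ρB n * (sp n 1 (n-1))⁻¹) * σN n 1 =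
    σN n 1 * (ρB n * (sp n 1 (n-1))⁻¹) * σN n 1 * (ρB n * (sp n 1 (n-1))⁻¹) := by
  set W := sp n 1 (n-1) with hW
  set V := sp n 2 (n-1) with hV
  set U := sp n 1 (n-2) with hU
  set ρ := ρB n with hρ
  set s1 := σN n 1 with hs1
  set sm := σN n (n-1) with hsm
  have hW1 : W = s1 * V := sp_cons (by omega)
  have hW2 : W = U * sm := sp_snoc (by omega) (by omega)
  have hρU : ρ * U = V * ρ := by
    have := rho_sp (n := n) 1 (n-2)
    rwa [show n - 2 + 1 = n - 1 by omega] at this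
  have key2 : V * W = W * U := spW hn
  have hVρ : V⁻¹ * ρ = ρ * U⁻¹ := by
    rw [inv_mul_eq_iff_eq_mul, ← mul_assoc, ← hρU]
    group
  have hs1ρ : s1 * ρ = ρ * σN n 0 := (rhoN (n := n) 0).symm
  have h0ρ : σN n 0 * ρ = ρ * sm := by
    have := rhoN (n := n) (n-1)
    rw [show n - 1 + 1 = n by omega] at this
    rw [show σN n 0 = σN n n by simp [σN, ZMod.natCast_self]]
    exact this.symm
  -- sm * (U⁻¹ * V⁻¹) = U⁻¹ * V⁻¹ * s1
  have h3 : V * (U * sm) = s1 * (V * U) := by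
    rw [← hW2, key2, hW1]; group
  have h4 : sm = U⁻¹ * (V⁻¹ * (s1 * (V * U))) := by
    rw [← h3]; group
  have hcomm : sm * (U⁻¹ * V⁻¹) = U⁻¹ * V⁻¹ * s1 := by
    rw [h4]; group
  have hAs : ρ * W⁻¹ * s1 = ρ * V⁻¹ := by rw [hW1]; group
  have hXX : (ρ * V⁻¹) * (ρ * V⁻¹) = ρ * ρ * (U⁻¹ * V⁻¹) := by
    rw [show (ρ * V⁻¹) * (ρ * V⁻¹) = ρ * (V⁻¹ * ρ) * V⁻¹ from by group, hVρ]
    group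
  have main : (ρ * V⁻¹) * (ρ * V⁻¹) * s1 = s1 * ((ρ * V⁻¹) * (ρ * V⁻¹)) := by
    calc (ρ * V⁻¹) * (ρ * V⁻¹) * s1 = ρ * ρ * (U⁻¹ * V⁻¹) * s1 := by rw [hXX]
      _ = ρ * ρ * (sm * (U⁻¹ * V⁻¹)) := by rw [hcomm]; group
      _ = ρ * (ρ * sm) * (U⁻¹ * V⁻¹) := by group
      _ = ρ * (σN n 0 * ρ) * (U⁻¹ * V⁻¹) := by rw [h0ρ]
      _ = (ρ * σN n 0) * (ρ * (U⁻¹ * V⁻¹)) := by group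
      _ = s1 * ρ * (ρ * (U⁻¹ * V⁻¹)) := by rw [← hs1ρ]
      _ = s1 * (ρ * ρ * (U⁻¹ * V⁻¹)) := by group
      _ = s1 * ((ρ * V⁻¹) * (ρ * V⁻¹)) := by rw [hXX]
  calc ρ * W⁻¹ * s1 * (ρ * W⁻¹) * s1
      = (ρ * W⁻¹ * s1) * (ρ * W⁻¹ * s1) := by group
    _ = (ρ * V⁻¹) * (ρ * V⁻¹) := by rw [hAs]
    _ = s1 * ((ρ * V⁻¹) * (ρ * V⁻¹)) * s1⁻¹ := by rw [← main]; group
    _ = s1 * ((ρ * W⁻¹ * s1) * (ρ * W⁻¹ * s1)) * s1⁻¹ := by rw [hAs]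
    _ = s1 * (ρ * W⁻¹) * s1 * (ρ * W⁻¹) := by group

end Bside

/-! ### BB side -/

section BBside

variable {n : ℕ}

lemma BBb01 (i j : Fin n) (hi : (i : ℕ) = 0) (hj : (j : ℕ) = 1) :
    σBB n i * σBB n j * σBB n i * σBB n j = σBB n j * σBB n i * σBB n j * σBB n i := by
  have := mk_rel_one (rels := BBrels n)
    (r := FreeGroup.of i * FreeGroup.of j * FreeGroup.of i * FreeGroup.of j *
      (FreeGroup.of i)⁻¹ * (FreeGroup.of j)⁻¹ * (FreeGroup.of i)⁻¹ * (FreeGroup.of j)⁻¹)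
    (Or.inl ⟨i, j, hi, hj, rfl⟩)
  simp only [map_mul, map_inv] at this
  have h : σBB n i * σBB n j * σBB n i * σBB n j *
      (σBB n i)⁻¹ * (σBB n j)⁻¹ * (σBB n i)⁻¹ * (σBB n j)⁻¹ = 1 := by
    simpa [σBB, PresentedGroup.of] using this
  have h2 : (σBB n i * σBB n j * σBB n i * σBB n j) *
      (σBB n j * σBB n i * σBB n j * σBB n i)⁻¹ = 1 := by
    rw [← h]; group
  exact mul_inv_eq_one.mp h2

lemma BBbraid (i j : Fin n) (hi : 1 ≤ (i : ℕ)) (hj : (j : ℕ) = (i : ℕ) + 1) :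
    σBB n i * σBB n j * σBB n i = σBB n j * σBB n i * σBB n j := by
  have := mk_rel_one (rels := BBrels n)
    (r := FreeGroup.of i * FreeGroup.of j * FreeGroup.of i *
      (FreeGroup.of j)⁻¹ * (FreeGroup.of i)⁻¹ * (FreeGroup.of j)⁻¹)
    (Or.inr (Or.inl ⟨i, j, hi, hj, rfl⟩))
  simp only [map_mul, map_inv] at this
  have h : σBB n i * σBB n j * σBB n i *
      (σBB n j)⁻¹ * (σBB n i)⁻¹ * (σBB n j)⁻¹ = 1 := by
    simpa [σBB, PresentedGroup.of] using this
  have h2 : (σBB n i * σBB n j * σBB n i) *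
      (σBB n j * σBB n i * σBB n j)⁻¹ = 1 := by
    rw [← h]; group
  exact mul_inv_eq_one.mp h2

lemma BBcomm (i j : Fin n) (h : (i : ℕ) + 2 ≤ (j : ℕ) ∨ (j : ℕ) + 2 ≤ (i : ℕ)) :
    σBB n i * σBB n j = σBB n j * σBB n i := by
  have := mk_rel_one (rels := BBrels n)
    (r := FreeGroup.of i * FreeGroup.of j * (FreeGroup.of i)⁻¹ * (FreeGroup.of j)⁻¹)
    (Or.inr (Or.inr ⟨i, j, h, rfl⟩))
  simp only [map_mul, map_inv] at this
  exact commutatorElement_eq_one_iff_mul_comm.mp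
    (by simpa [commutatorElement_def, σBB, PresentedGroup.of] using this)

def σM (n : ℕ) (k : ℕ) : BB n := if h : k < n then σBB n ⟨k, h⟩ else 1

lemma σM_eq (k : ℕ) (h : k < n) : σM n k = σBB n ⟨k, h⟩ := dif_pos h

lemma commB {i j : ℕ} (hj : j < n) (h : i + 2 ≤ j) :
    σM n i * σM n j = σM n j * σM n i := by
  rw [σM_eq i (by omega), σM_eq j hj]
  exact BBcomm _ _ (Or.inl (by simpa using h))

lemma braidB {i : ℕ} (hi : 1 ≤ i) (h : i + 1 < n) :
    σM n i * σM n (i+1) * σM n i = σM n (i+1) * σM n i * σM n (i+1) := by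
  rw [σM_eq i (by omega), σM_eq (i+1) h]
  exact BBbraid _ _ (by simpa using hi) (by simp)

lemma b01B (hn : 3 ≤ n) :
    σM n 0 * σM n 1 * σM n 0 * σM n 1 = σM n 1 * σM n 0 * σM n 1 * σM n 0 := by
  rw [σM_eq 0 (by omega), σM_eq 1 (by omega)]
  exact BBb01 _ _ (by simp) (by simp)

def spB (n : ℕ) (a b : ℕ) : BB n := ((List.range' a (b + 1 - a)).map fun k => σM n k).prod

lemma spB_nil {a b : ℕ} (h : b + 1 ≤ a) : spB n a b = 1 := by
  simp [spB, Nat.sub_eq_zero_of_le h]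

lemma spB_cons {a b : ℕ} (h : a ≤ b) : spB n a b = σM n a * spB n (a+1) b := by
  have e : b + 1 - a = (b + 1 - (a+1)) + 1 := by omega
  rw [spB, e, List.range'_succ]
  simp [spB]

lemma spB_snoc {a b : ℕ} (h : a ≤ b) (hb : 1 ≤ b) : spB n a b = spB n a (b-1) * σM n b := by
  have e : b + 1 - a = (b - a) + 1 := by omega
  have e2 : (b - 1) + 1 - a = b - a := by omega
  rw [spB, e, List.range'_concat, spB, e2]
  have : a + 1 * (b - a) = b := by omega
  rw [this]
  simp

lemma spB_append {a b c : ℕ} (h1 : a ≤ c + 1) (h2 : c ≤ b) :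
    spB n a b = spB n a c * spB n (c+1) b := by
  have e : List.range' a (c + 1 - a) ++ List.range' (c+1) (b + 1 - (c+1)) =
      List.range' a (b + 1 - a) := by
    have := List.range'_append (s := a) (m := c + 1 - a) (n := b + 1 - (c+1)) (step := 1)
    rw [show a + 1 * (c + 1 - a) = c + 1 by omega] at this
    rw [show c + 1 - a + (b + 1 - (c+1)) = b + 1 - a by omega] at this
    exact this
  rw [spB, ← e]
  simp [spB]

lemma spB_commute {a b j : ℕ}
    (h : ∀ k, a ≤ k → k ≤ b → σM n j * σM n k = σM n k * σM n j) :
    Commute (σM n j) (spB n a b) := by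
  apply Commute.list_prod_right
  intro x hx
  rw [List.mem_map] at hx
  obtain ⟨k, hk, rfl⟩ := hx
  rw [List.mem_range'_1] at hk
  exact h k hk.1 (by omega)

lemma spB_shift {a b j : ℕ} (hb : b < n) (h2 : 2 ≤ j) (hj1 : a < j) (hj2 : j ≤ b) :
    σM n j * spB n a b = spB n a b * σM n (j-1) := by
  have e1 : spB n a b = spB n a (j-2) * spB n (j-1) b := by
    have := spB_append (n := n) (a := a) (b := b) (c := j - 2) (by omega) (by omega)
    rw [show j - 2 + 1 = j - 1 by omega] at this
    exact this
  have e2 : spB n (j-1) b = σM n (j-1) * (σM n j * spB n (j+1) b) := by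
    rw [spB_cons (show j - 1 ≤ b by omega), show j - 1 + 1 = j by omega,
      spB_cons (show j ≤ b by omega)]
  have c1 : Commute (σM n j) (spB n a (j-2)) := by
    apply spB_commute
    intro k hk1 hk2
    exact (commB (by omega) (show k + 2 ≤ j by omega)).symm
  have c2 : Commute (σM n (j-1)) (spB n (j+1) b) := by
    apply spB_commute
    intro k hk1 hk2
    exact commB (by omega) (show (j-1) + 2 ≤ k by omega)
  have br : σM n (j-1) * σM n j * σM n (j-1) = σM n j * σM n (j-1) * σM n j := by
    have := braidB (n := n) (i := j - 1) (by omega) (by omega)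
    rwa [show j - 1 + 1 = j by omega] at this
  calc σM n j * spB n a b
      = σM n j * (spB n a (j-2) * (σM n (j-1) * (σM n j * spB n (j+1) b))) := by
        rw [← e2, ← e1]
    _ = spB n a (j-2) * (σM n j * σM n (j-1) * σM n j) * spB n (j+1) b := by
        rw [← mul_assoc, c1.eq]; group
    _ = spB n a (j-2) * (σM n (j-1) * σM n j * σM n (j-1)) * spB n (j+1) b := by
        rw [← br]
    _ = spB n a (j-2) * (σM n (j-1) * σM n j) * (σM n (j-1) * spB n (j+1) b) := by
        group
    _ = spB n a (j-2) * (σM n (j-1) * (σM n j * spB n (j+1) b)) * σM n (j-1) := by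
        rw [c2.eq]; group
    _ = spB n a b * σM n (j-1) := by rw [← e2, ← e1]

/-- The element `R = σ₀σ₁⋯σ_{n-1}` of `BB n`. -/
def RB (n : ℕ) : BB n := spB n 0 (n-1)

/-- The element `T = Rσ_{n-1}R⁻¹` of `BB n`. -/
def TB (n : ℕ) : BB n := RB n * σM n (n-1) * (RB n)⁻¹

lemma conjR (hn : 3 ≤ n) {i : ℕ} (h1 : 1 ≤ i) (h2 : i ≤ n - 2) :
    σM n (i+1) * RB n = RB n * σM n i := by
  have := spB_shift (n := n) (a := 0) (b := n-1) (j := i+1)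
    (by omega) (by omega) (by omega) (by omega)
  rw [show i + 1 - 1 = i by omega] at this
  exact this

def DB (n : ℕ) : ℕ → BB n
  | 0 => 1
  | 1 => 1
  | (m+2) => DB n (m+1) * (σM n (m+2) * σM n (m+1))

lemma DB_succ {m : ℕ} (h : 1 ≤ m) : DB n (m+1) = DB n m * (σM n (m+1) * σM n m) := by
  match m, h with
  | (k+1), _ => rfl

lemma Dpush : ∀ m : ℕ, 1 ≤ m → m < n → σM n 1 * DB n m = DB n m * σM n m := by
  intro m
  induction m with
  | zero => intro h; omega
  | succ k ih =>
    intro _ hlt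
    rcases Nat.lt_or_ge k 1 with hk | hk
    · interval_cases k
      simp [DB]
    · have br : σM n k * σM n (k+1) * σM n k = σM n (k+1) * σM n k * σM n (k+1) :=
        braidB hk (by omega)
      calc σM n 1 * DB n (k+1)
          = (σM n 1 * DB n k) * (σM n (k+1) * σM n k) := by rw [DB_succ hk]; group
        _ = DB n k * σM n k * (σM n (k+1) * σM n k) := by rw [ih hk (by omega)]
        _ = DB n k * (σM n k * σM n (k+1) * σM n k) := by group
        _ = DB n k * (σM n (k+1) * σM n k * σM n (k+1)) := by rw [br]
        _ = DB n (k+1) * σM n (k+1) := by rw [DB_succ hk]; group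

lemma Rsq (hn : 3 ≤ n) : ∀ m : ℕ, 1 ≤ m → m ≤ n - 1 →
    spB n 0 m * spB n 0 m = σM n 0 * σM n 1 * σM n 0 * (DB n m * σM n m) := by
  intro m
  induction m with
  | zero => intro h; omega
  | succ k ih =>
    intro _ hk2
    rcases Nat.lt_or_ge k 1 with hk | hk
    · interval_cases k
      have e : spB n 0 1 = σM n 0 * σM n 1 := by
        rw [spB_cons (by omega), spB_cons (by omega), spB_nil (by omega)]
        group
      rw [e]
      simp [DB]
      group
    · -- k ≥ 1, k+1 ≤ n-1
      have hsnoc : spB n 0 (k+1) = spB n 0 k * σM n (k+1) := by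
        have := spB_snoc (n := n) (a := 0) (b := k+1) (by omega) (by omega)
        rwa [show k + 1 - 1 = k by omega] at this
      have hsnoc2 : spB n 0 k = spB n 0 (k-1) * σM n k := by
        have := spB_snoc (n := n) (a := 0) (b := k) (by omega) (by omega)
        exact this
      have hcm : Commute (σM n (k+1)) (spB n 0 (k-1)) := by
        apply spB_commute
        intro j hj1 hj2
        exact (commB (by omega) (by omega)).symm
      have br : σM n k * σM n (k+1) * σM n k = σM n (k+1) * σM n k * σM n (k+1) :=
        braidB (by omega) (by omega)
      calc spB n 0 (k+1) * spB n 0 (k+1)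
          = spB n 0 k * (σM n (k+1) * spB n 0 (k-1)) * (σM n k * σM n (k+1)) := by
            rw [hsnoc, hsnoc2]; group
        _ = spB n 0 k * (spB n 0 (k-1) * σM n (k+1)) * (σM n k * σM n (k+1)) := by
            rw [hcm.eq]
        _ = spB n 0 k * spB n 0 (k-1) * (σM n (k+1) * σM n k * σM n (k+1)) := by
            group
        _ = spB n 0 k * spB n 0 (k-1) * (σM n k * σM n (k+1) * σM n k) := by
            rw [br]
        _ = spB n 0 k * (spB n 0 (k-1) * σM n k) * (σM n (k+1) * σM n k) := by
            group
        _ = spB n 0 k * spB n 0 k * (σM n (k+1) * σM n k) := by rw [← hsnoc2]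
        _ = σM n 0 * σM n 1 * σM n 0 * (DB n k * σM n k) * (σM n (k+1) * σM n k) := by
            rw [ih hk (by omega)]
        _ = σM n 0 * σM n 1 * σM n 0 * DB n k * (σM n k * σM n (k+1) * σM n k) := by
            group
        _ = σM n 0 * σM n 1 * σM n 0 * DB n k * (σM n (k+1) * σM n k * σM n (k+1)) := by
            rw [br]
        _ = σM n 0 * σM n 1 * σM n 0 * (DB n (k+1) * σM n (k+1)) := by
            rw [DB_succ hk]; group

lemma keyR (hn : 3 ≤ n) :
    RB n * RB n * σM n (n-1) = σM n 1 * (RB n * RB n) := by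
  have h1 := Rsq hn (n-1) (by omega) (by omega)
  have h2 := Dpush (n := n) (n-1) (by omega) (by omega)
  symm
  rw [RB, h1]
  calc σM n 1 * (σM n 0 * σM n 1 * σM n 0 * (DB n (n-1) * σM n (n-1)))
      = (σM n 1 * σM n 0 * σM n 1 * σM n 0) * DB n (n-1) * σM n (n-1) := by group
    _ = (σM n 0 * σM n 1 * σM n 0 * σM n 1) * DB n (n-1) * σM n (n-1) := by
        rw [b01B hn]
    _ = σM n 0 * σM n 1 * σM n 0 * (σM n 1 * DB n (n-1)) * σM n (n-1) := by group
    _ = σM n 0 * σM n 1 * σM n 0 * (DB n (n-1) * σM n (n-1)) * σM n (n-1) := by rw [h2]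

lemma TconjR (hn : 3 ≤ n) : RB n * TB n = σM n 1 * RB n := by
  calc RB n * TB n = (RB n * RB n * σM n (n-1)) * (RB n)⁻¹ := by rw [TB]; group
    _ = (σM n 1 * (RB n * RB n)) * (RB n)⁻¹ := by rw [keyR hn]
    _ = σM n 1 * RB n := by group

lemma T_eq (hn : 3 ≤ n) : TB n = (RB n)⁻¹ * (σM n 1 * RB n) := by
  calc TB n = (RB n)⁻¹ * (RB n * TB n) := by group
    _ = (RB n)⁻¹ * (σM n 1 * RB n) := by rw [TconjR hn]

lemma hRs : RB n * σM n (n-1) = TB n * RB n := by rw [TB]; group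

lemma hsR : σM n (n-1) * (RB n)⁻¹ = (RB n)⁻¹ * TB n := by rw [TB]; group

lemma hTRi (hn : 3 ≤ n) : TB n * (RB n)⁻¹ = (RB n)⁻¹ * σM n 1 := by
  rw [show TB n * (RB n)⁻¹ = (RB n)⁻¹ * (RB n * TB n) * (RB n)⁻¹ from by group,
    TconjR hn]
  group

lemma Tcomm (hn : 3 ≤ n) {j : ℕ} (h2 : 2 ≤ j) (hj : j ≤ n - 2) :
    TB n * σM n j = σM n j * TB n := by
  have hconj : σM n j * RB n = RB n * σM n (j-1) := by
    have := conjR hn (i := j - 1) (by omega) (by omega)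
    rwa [show j - 1 + 1 = j by omega] at this
  have hinv : (RB n)⁻¹ * σM n j = σM n (j-1) * (RB n)⁻¹ := inv_shift hconj
  have hc : σM n (n-1) * σM n (j-1) = σM n (j-1) * σM n (n-1) :=
    (commB (by omega) (show (j-1) + 2 ≤ n - 1 by omega)).symm
  calc TB n * σM n j
      = RB n * σM n (n-1) * ((RB n)⁻¹ * σM n j) := by rw [TB]; group
    _ = RB n * (σM n (n-1) * σM n (j-1)) * (RB n)⁻¹ := by rw [hinv]; group
    _ = RB n * (σM n (j-1) * σM n (n-1)) * (RB n)⁻¹ := by rw [hc]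
    _ = (RB n * σM n (j-1)) * (σM n (n-1) * (RB n)⁻¹) := by group
    _ = (RB n * σM n (j-1)) * ((RB n)⁻¹ * TB n) := by rw [hsR]
    _ = (σM n j * RB n) * ((RB n)⁻¹ * TB n) := by rw [← hconj]
    _ = σM n j * TB n := by group

lemma braidT1 (hn : 3 ≤ n) :
    TB n * σM n 1 * TB n = σM n 1 * TB n * σM n 1 := by
  have hc1 : σM n 2 * RB n = RB n * σM n 1 := conjR hn (by omega) (by omega)
  have hc2 : (RB n)⁻¹ * σM n 2 = σM n 1 * (RB n)⁻¹ := inv_shift hc1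
  have br : σM n 1 * σM n 2 * σM n 1 = σM n 2 * σM n 1 * σM n 2 :=
    braidB (by omega) (by omega)
  rw [T_eq hn]
  calc (RB n)⁻¹ * (σM n 1 * RB n) * σM n 1 * ((RB n)⁻¹ * (σM n 1 * RB n))
      = (RB n)⁻¹ * σM n 1 * (RB n * σM n 1) * (RB n)⁻¹ * (σM n 1 * RB n) := by group
    _ = (RB n)⁻¹ * σM n 1 * (σM n 2 * RB n) * (RB n)⁻¹ * (σM n 1 * RB n) := by
        rw [hc1]
    _ = (RB n)⁻¹ * (σM n 1 * σM n 2 * σM n 1) * RB n := by group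
    _ = (RB n)⁻¹ * (σM n 2 * σM n 1 * σM n 2) * RB n := by rw [br]
    _ = ((RB n)⁻¹ * σM n 2) * σM n 1 * (σM n 2 * RB n) := by group
    _ = (σM n 1 * (RB n)⁻¹) * σM n 1 * (RB n * σM n 1) := by rw [hc2, hc1]
    _ = σM n 1 * ((RB n)⁻¹ * (σM n 1 * RB n)) * σM n 1 := by group

lemma braidTm (hn : 3 ≤ n) :
    σM n (n-1) * TB n * σM n (n-1) = TB n * σM n (n-1) * TB n := by
  have lhs : RB n * (σM n (n-1) * TB n * σM n (n-1)) * (RB n)⁻¹ =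
      TB n * σM n 1 * TB n := by
    calc RB n * (σM n (n-1) * TB n * σM n (n-1)) * (RB n)⁻¹
        = (RB n * σM n (n-1)) * TB n * (σM n (n-1) * (RB n)⁻¹) := by group
      _ = (TB n * RB n) * TB n * ((RB n)⁻¹ * TB n) := by rw [hRs, hsR]
      _ = TB n * (RB n * TB n) * ((RB n)⁻¹ * TB n) := by group
      _ = TB n * (σM n 1 * RB n) * ((RB n)⁻¹ * TB n) := by rw [TconjR hn]
      _ = TB n * σM n 1 * TB n := by group
  have rhs : RB n * (TB n * σM n (n-1) * TB n) * (RB n)⁻¹ =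
      σM n 1 * TB n * σM n 1 := by
    calc RB n * (TB n * σM n (n-1) * TB n) * (RB n)⁻¹
        = (RB n * TB n) * σM n (n-1) * (TB n * (RB n)⁻¹) := by group
      _ = (σM n 1 * RB n) * σM n (n-1) * ((RB n)⁻¹ * σM n 1) := by
          rw [TconjR hn, hTRi hn]
      _ = σM n 1 * (RB n * σM n (n-1)) * ((RB n)⁻¹ * σM n 1) := by group
      _ = σM n 1 * (TB n * RB n) * ((RB n)⁻¹ * σM n 1) := by rw [hRs]
      _ = σM n 1 * TB n * σM n 1 := by group
  have main : RB n * (σM n (n-1) * TB n * σM n (n-1)) * (RB n)⁻¹ =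
      RB n * (TB n * σM n (n-1) * TB n) * (RB n)⁻¹ := by
    rw [lhs, rhs, braidT1 hn]
  exact mul_left_cancel (mul_right_cancel main)

end BBside

/-! ### the homomorphisms -/

section Homs

variable {n : ℕ}

/-- The image of the generators of `BB n` in `B n`. -/
def fgen (n : ℕ) : Fin n → B n := fun i =>
  if (i : ℕ) = 0 then
    ρB n * (List.ofFn (fun k : Fin (n - 1) =>
      (σB n ((n - 1 - (k : ℕ) : ℕ) : ZMod n))⁻¹)).prod
  else σN n (i : ℕ)

lemma ofFn_eq_inv_sp (hn : 3 ≤ n) :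
    (List.ofFn (fun k : Fin (n - 1) =>
      (σB n ((n - 1 - (k : ℕ) : ℕ) : ZMod n))⁻¹)).prod = (sp n 1 (n-1))⁻¹ := by
  rw [sp, show n - 1 + 1 - 1 = n - 1 by omega, List.prod_inv_reverse]
  congr 1
  apply List.ext_getElem
  · simp
  · intro k h1 h2
    have hk : k < n - 1 := by simpa using h1
    simp only [List.getElem_ofFn, List.getElem_reverse, List.getElem_map,
      List.getElem_range', List.length_map, List.length_range', σN]
    congr 3
    omega

lemma fgen_zero (hn : 3 ≤ n) {i : Fin n} (hi : (i : ℕ) = 0) :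
    fgen n i = ρB n * (sp n 1 (n-1))⁻¹ := by
  rw [fgen, if_pos hi, ofFn_eq_inv_sp hn]

lemma fgen_pos {i : Fin n} (hi : 1 ≤ (i : ℕ)) : fgen n i = σN n (i : ℕ) := by
  rw [fgen, if_neg (by omega)]

lemma hφ (hn : 3 ≤ n) : ∀ r ∈ BBrels n, FreeGroup.lift (fgen n) r = 1 := by
  intro r hr
  rcases hr with ⟨i, j, hi, hj, rfl⟩ | ⟨i, j, hi, hj, rfl⟩ | ⟨i, j, hij, rfl⟩
  · -- the 0-1 relation
    simp only [map_mul, map_inv, FreeGroup.lift_apply_of]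
    rw [fgen_zero hn hi, fgen_pos (by omega), hj]
    have key := keyI (n := n) hn
    set A := ρB n * (sp n 1 (n-1))⁻¹
    set s := σN n 1
    rw [show A * s * A * s * A⁻¹ * s⁻¹ * A⁻¹ * s⁻¹ =
      (A * s * A * s) * (s * A * s * A)⁻¹ from by group, key]
    group
  · -- braid relations
    simp only [map_mul, map_inv, FreeGroup.lift_apply_of]
    rw [fgen_pos hi, fgen_pos (by omega), hj]
    have br : σN n (i : ℕ) * σN n ((i : ℕ)+1) * σN n (i : ℕ) =
        σN n ((i : ℕ)+1) * σN n (i : ℕ) * σN n ((i : ℕ)+1) := by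
      have := braidN (n := n) ((i : ℕ)+1) (by omega)
      rwa [show (i : ℕ) + 1 - 1 = (i : ℕ) by omega] at this
    set x := σN n (i : ℕ)
    set y := σN n ((i : ℕ)+1)
    rw [show x * y * x * y⁻¹ * x⁻¹ * y⁻¹ = (x * y * x) * (y * x * y)⁻¹ from by group, br]
    group
  · -- commutation relations
    simp only [map_mul, map_inv, FreeGroup.lift_apply_of]
    have hc : fgen n i * fgen n j = fgen n j * fgen n i := by
      have hilt : (i : ℕ) < n := i.isLt
      have hjlt : (j : ℕ) < n := j.isLt
      rcases Nat.eq_zero_or_pos (i : ℕ) with hi0 | hi0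
      · -- i = 0, j ∈ [2, n-1]
        have hj2 : 2 ≤ (j : ℕ) := by omega
        rw [fgen_zero hn hi0, fgen_pos (by omega)]
        exact commA hn hj2 (by omega)
      · rcases Nat.eq_zero_or_pos (j : ℕ) with hj0 | hj0
        · have hi2 : 2 ≤ (i : ℕ) := by omega
          rw [fgen_zero hn hj0, fgen_pos (by omega)]
          exact (commA hn hi2 (by omega)).symm
        · rw [fgen_pos hi0, fgen_pos hj0]
          rcases hij with h | h
          · exact commN hn (by omega) h (by omega)
          · exact (commN hn (by omega) h (by omega)).symm
    rw [show fgen n i * fgen n j * (fgen n i)⁻¹ * (fgen n j)⁻¹ =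
      (fgen n i * fgen n j) * (fgen n j * fgen n i)⁻¹ from by group, hc]
    group

/-- The homomorphism `BB n →* B n`. -/
def φhom (hn : 3 ≤ n) : BB n →* B n := PresentedGroup.toGroup (hφ hn)

/-- The image of the generators of `B n` in `BB n`. -/
def ggen (n : ℕ) : BGen n → BB n
  | .s i => if i.val = 0 then TB n else σM n i.val
  | .p => RB n

lemma val_cast_eq_self (hn : 3 ≤ n) (i : ZMod n) : ((i.val : ℕ) : ZMod n) = i := by
  haveI : NeZero n := ⟨by omega⟩
  rw [ZMod.natCast_val, ZMod.cast_id]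

lemma hψ (hn : 3 ≤ n) : ∀ r ∈ Brels n, FreeGroup.lift (ggen n) r = 1 := by
  haveI : NeZero n := ⟨by omega⟩
  intro r hr
  rcases hr with ⟨i, j, h1, h2, rfl⟩ | ⟨i, rfl⟩ | ⟨i, rfl⟩
  · -- commutation
    simp only [fσ, map_mul, map_inv, FreeGroup.lift_apply_of]
    have hc : ggen n (.s i) * ggen n (.s j) = ggen n (.s j) * ggen n (.s i) := by
      by_cases hij : i = j
      · rw [hij]
      · have hvne : i.val ≠ j.val := fun e => hij (by
          rw [← val_cast_eq_self hn i, ← val_cast_eq_self hn j, e])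
        have hne1 : i.val ≠ j.val + 1 := by
          intro e
          apply h1
          rw [← val_cast_eq_self hn i, ← val_cast_eq_self hn j, e]
          push_cast; ring
        have hne2 : j.val ≠ i.val + 1 := by
          intro e
          apply h2
          rw [← val_cast_eq_self hn i, ← val_cast_eq_self hn j, e]
          push_cast; ring
        have hne3 : ¬(i.val = 0 ∧ j.val = n - 1) := by
          rintro ⟨e1, e2⟩
          apply h1
          rw [← val_cast_eq_self hn i, ← val_cast_eq_self hn j, e1, e2,
            ← neg_one_eq hn]
          push_cast; ring
        have hne4 : ¬(j.val = 0 ∧ i.val = n - 1) := by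
          rintro ⟨e1, e2⟩
          apply h2
          rw [← val_cast_eq_self hn i, ← val_cast_eq_self hn j, e1, e2,
            ← neg_one_eq hn]
          push_cast; ring
        have hilt := ZMod.val_lt i
        have hjlt := ZMod.val_lt j
        simp only [ggen]
        rcases Nat.eq_zero_or_pos i.val with hi0 | hi0
        · rw [if_pos hi0, if_neg (by omega)]
          exact Tcomm hn (by omega) (by omega)
        · rcases Nat.eq_zero_or_pos j.val with hj0 | hj0
          · rw [if_pos hj0, if_neg (by omega)]
            exact (Tcomm hn (by omega) (by omega)).symm
          · rw [if_neg (by omega), if_neg (by omega)]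
            rcases Nat.lt_or_ge i.val j.val with h | h
            · exact commB (by omega) (by omega)
            · exact (commB (by omega) (by omega)).symm
    set x := ggen n (.s i)
    set y := ggen n (.s j)
    rw [show x * y * x⁻¹ * y⁻¹ = (x * y) * (y * x)⁻¹ from by group, hc]
    group
  · -- braid
    simp only [fσ, map_mul, map_inv, FreeGroup.lift_apply_of]
    have hbr : ggen n (.s i) * ggen n (.s (i+1)) * ggen n (.s i) =
        ggen n (.s (i+1)) * ggen n (.s i) * ggen n (.s (i+1)) := by
      have hilt := ZMod.val_lt i
      simp only [ggen]
      rcases Nat.eq_zero_or_pos i.val with hi0 | hi0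
      · have hi : i = 0 := by rw [← val_cast_eq_self hn i, hi0]; simp
        have hv : (i+1).val = 1 := by
          rw [hi, zero_add, ZMod.val_one_eq_one_mod, Nat.mod_eq_of_lt (by omega)]
        rw [if_pos hi0, hv, if_neg (by omega)]
        exact braidT1 hn
      · rcases Nat.lt_or_ge i.val (n-1) with hlt | hge
        · have hv : (i+1).val = i.val + 1 := by
            rw [← val_cast_eq_self hn i]
            rw [show ((i.val : ℕ) : ZMod n) + 1 = ((i.val + 1 : ℕ) : ZMod n) by push_cast; ring]
            rw [ZMod.val_cast_of_lt (by omega), ZMod.val_cast_of_lt (by omega)]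
          rw [if_neg (by omega), hv, if_neg (by omega)]
          exact braidB hi0 (by omega)
        · have hival : i.val = n - 1 := by omega
          have hv : (i+1).val = 0 := by
            rw [← val_cast_eq_self hn i, hival,
              show ((n - 1 : ℕ) : ZMod n) + 1 = ((n : ℕ) : ZMod n) by
                rw [Nat.cast_sub (by omega)]; push_cast; ring,
              ZMod.natCast_self, ZMod.val_zero]
          rw [if_neg (by omega), hv, if_pos rfl, hival]
          exact braidTm hn
    set x := ggen n (.s i)
    set y := ggen n (.s (i+1))
    rw [show x * y * x * y⁻¹ * x⁻¹ * y⁻¹ = (x * y * x) * (y * x * y)⁻¹ from by group, hbr]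
    group
  · -- rho relation
    simp only [fσ, fρ, map_mul, map_inv, FreeGroup.lift_apply_of]
    have hc : RB n * ggen n (.s i) = ggen n (.s (i+1)) * RB n := by
      have hilt := ZMod.val_lt i
      simp only [ggen]
      rcases Nat.eq_zero_or_pos i.val with hi0 | hi0
      · have hi : i = 0 := by rw [← val_cast_eq_self hn i, hi0]; simp
        have hv : (i+1).val = 1 := by
          rw [hi, zero_add, ZMod.val_one_eq_one_mod, Nat.mod_eq_of_lt (by omega)]
        rw [if_pos hi0, hv, if_neg (by omega)]
        exact TconjR hn
      · rcases Nat.lt_or_ge i.val (n-1) with hlt | hge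
        · have hv : (i+1).val = i.val + 1 := by
            rw [← val_cast_eq_self hn i]
            rw [show ((i.val : ℕ) : ZMod n) + 1 = ((i.val + 1 : ℕ) : ZMod n) by push_cast; ring]
            rw [ZMod.val_cast_of_lt (by omega), ZMod.val_cast_of_lt (by omega)]
          rw [if_neg (by omega), hv, if_neg (by omega)]
          exact (conjR hn hi0 (by omega)).symm
        · have hival : i.val = n - 1 := by omega
          have hv : (i+1).val = 0 := by
            rw [← val_cast_eq_self hn i, hival,
              show ((n - 1 : ℕ) : ZMod n) + 1 = ((n : ℕ) : ZMod n) by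
                rw [Nat.cast_sub (by omega)]; push_cast; ring,
              ZMod.natCast_self, ZMod.val_zero]
          rw [if_neg (by omega), hv, if_pos rfl, hival]
          exact hRs
    set x := ggen n (.s i)
    set y := ggen n (.s (i+1))
    rw [show ggen n BGen.p = RB n from rfl,
      show RB n * x * (RB n)⁻¹ * y⁻¹ = (RB n * x) * (y * RB n)⁻¹ from by group, hc]
    group

/-- The homomorphism `B n →* BB n`. -/
def ψhom (hn : 3 ≤ n) : B n →* BB n := PresentedGroup.toGroup (hψ hn)

lemma φ_of (hn : 3 ≤ n) (i : Fin n) : φhom hn (σBB n i) = fgen n i :=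
  PresentedGroup.toGroup.of _

lemma ψ_of (hn : 3 ≤ n) (g : BGen n) : ψhom hn (PresentedGroup.of g) = ggen n g :=
  PresentedGroup.toGroup.of _

lemma ψ_sp (hn : 3 ≤ n) : ψhom hn (sp n 1 (n-1)) = spB n 1 (n-1) := by
  rw [sp, spB, map_list_prod, List.map_map]
  congr 1
  apply List.map_congr_left
  intro k hk
  rw [List.mem_range'_1] at hk
  have hk1 : 1 ≤ k := hk.1
  have hk2 : k < n := by omega
  show ψhom hn (σN n k) = σM n k
  rw [σN, σB]
  rw [ψ_of hn]
  show (if ((k : ZMod n)).val = 0 then TB n else σM n ((k : ZMod n)).val) = σM n k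
  rw [ZMod.val_cast_of_lt hk2, if_neg (by omega)]

lemma φ_sp (hn : 3 ≤ n) : φhom hn (spB n 1 (n-1)) = sp n 1 (n-1) := by
  rw [sp, spB, map_list_prod, List.map_map]
  congr 1
  apply List.map_congr_left
  intro k hk
  rw [List.mem_range'_1] at hk
  have hk1 : 1 ≤ k := hk.1
  have hk2 : k < n := by omega
  show φhom hn (σM n k) = σN n k
  rw [σM_eq k hk2, φ_of hn, fgen_pos (by simpa using hk1)]

lemma φ_R (hn : 3 ≤ n) : φhom hn (RB n) = ρB n := by
  have h : RB n = σM n 0 * spB n 1 (n-1) := by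
    rw [RB, spB_cons (show 0 ≤ n - 1 by omega)]
  rw [h, map_mul, φ_sp hn, σM_eq 0 (by omega), φ_of hn,
    fgen_zero hn (by simp)]
  group

lemma comp1 (hn : 3 ≤ n) : (ψhom hn).comp (φhom hn) = MonoidHom.id (BB n) := by
  apply PresentedGroup.ext
  intro x
  show ψhom hn (φhom hn (σBB n x)) = PresentedGroup.of x
  rcases Nat.eq_zero_or_pos (x : ℕ) with hx0 | hx0
  · rw [φ_of hn, fgen_zero hn hx0, map_mul, map_inv, ψ_sp hn]
    rw [show ρB n = PresentedGroup.of (BGen.p : BGen n) from rfl, ψ_of hn]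
    show RB n * (spB n 1 (n-1))⁻¹ = PresentedGroup.of x
    rw [RB, spB_cons (show 0 ≤ n - 1 by omega)]
    rw [σM_eq 0 (by omega)]
    have hx : x = ⟨0, by omega⟩ := by
      apply Fin.ext; simpa using hx0
    rw [hx]
    show σBB n ⟨0, _⟩ * spB n 1 (n-1) * (spB n 1 (n-1))⁻¹ = σBB n ⟨0, _⟩
    group
  · rw [φ_of hn, fgen_pos hx0]
    rw [σN, σB, ψ_of hn]
    show (if ((((x : ℕ) : ZMod n)).val = 0) then TB n
      else σM n ((((x : ℕ) : ZMod n)).val)) = PresentedGroup.of x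
    rw [ZMod.val_cast_of_lt x.isLt, if_neg (by omega), σM_eq _ x.isLt]
    rfl

lemma comp2 (hn : 3 ≤ n) : (φhom hn).comp (ψhom hn) = MonoidHom.id (B n) := by
  haveI : NeZero n := ⟨by omega⟩
  apply PresentedGroup.ext
  intro g
  show φhom hn (ψhom hn (PresentedGroup.of g)) = PresentedGroup.of g
  rw [ψ_of hn]
  cases g with
  | p => exact φ_R hn
  | s i =>
    show φhom hn (if i.val = 0 then TB n else σM n i.val) = PresentedGroup.of (BGen.s i)
    rcases Nat.eq_zero_or_pos i.val with hi0 | hi0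
    · rw [if_pos hi0, TB, map_mul, map_mul, map_inv, φ_R hn,
        σM_eq (n-1) (by omega), φ_of hn, fgen_pos (by simpa using show 1 ≤ n - 1 by omega)]
      have hrho := rhoN (n := n) (n-1)
      rw [show n - 1 + 1 = n by omega] at hrho
      have hi : i = 0 := by
        haveI : NeZero n := ⟨by omega⟩
        rw [← val_cast_eq_self hn i, hi0]; simp
      have : ρB n * σN n (n-1) * (ρB n)⁻¹ = σN n n := by rw [hrho]; group
      show ρB n * σN n ((⟨n-1, by omega⟩ : Fin n) : ℕ) * (ρB n)⁻¹ = _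
      rw [show ((⟨n-1, by omega⟩ : Fin n) : ℕ) = n - 1 from rfl, this]
      show σB n ((n : ℕ) : ZMod n) = σB n i
      rw [ZMod.natCast_self, hi]
    · rw [if_neg (by omega), σM_eq i.val (ZMod.val_lt i), φ_of hn,
        fgen_pos (i := ⟨i.val, ZMod.val_lt i⟩) (show 1 ≤ i.val by omega)]
      show σB n ((i.val : ℕ) : ZMod n) = σB n i
      rw [val_cast_eq_self hn i]

end Homs

/-- for `n ≥ 3`, the assignments
`σ_0^B ↦ ρ̃σ_{n-1}⁻¹σ_{n-2}⁻¹⋯σ_1⁻¹` and `σ_i^B ↦ σ_i` (`1 ≤ i ≤ n-1`) define a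
group isomorphism from the type `B_n` braid group onto the extended affine braid
group `B_n`. -/
theorem statement14 (n : ℕ) (hn : 3 ≤ n) :
    ∃ φ : BB n ≃* B n,
      (∀ i : Fin n, (i : ℕ) = 0 →
        φ (σBB n i) = ρB n *
          (List.ofFn (fun k : Fin (n - 1) =>
            (σB n ((n - 1 - (k : ℕ) : ℕ) : ZMod n))⁻¹)).prod) ∧
      (∀ i : Fin n, 1 ≤ (i : ℕ) → φ (σBB n i) = σB n ((i : ℕ) : ZMod n)) := by
  refine ⟨MonoidHom.toMulEquiv (φhom hn) (ψhom hn) (comp1 hn) (comp2 hn), ?_, ?_⟩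
  · intro i hi
    show φhom hn (σBB n i) = _
    rw [φ_of hn, fgen, if_pos hi]
  · intro i hi
    show φhom hn (σBB n i) = _
    rw [φ_of hn, fgen_pos hi]
    rfl

end SkeinTL
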